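/- Define u : ℝ² → ℝ by u(x) = (x₁² − x₂²)·log‖x‖ for x ≠ 0 and u(0) = 0. Then: (i) u is continuously differentiable on ℝ² and infinitely differentiable on ℝ² ∖ {0}; (ii) for every x ≠ 0 the Laplacian of u satisfies Δu(x) = 4·(x₁² − x₂²)/‖x‖² (in particular |Δu(x)| ≤ 4); and (iii) there exists Γ ∈ (0,∞) such that for i ∈ {1,2} and every x with 0 < ‖x‖ < 1 one has ‖D^i u(x)‖ ≤ Γ·‖x‖^{2−i}·(1 + log(1/‖x‖)). -/

import Mathlib

/-- The function `u(x) = (x₁² - x₂²) log ‖x‖` on `ℝ²` (with `u(0) = 0`, since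
`log ‖0‖ = log 0 = 0` in Lean). -/
noncomputable def uLog (x : EuclideanSpace ℝ (Fin 2)) : ℝ :=
  ((x 0) ^ 2 - (x 1) ^ 2) * Real.log ‖x‖

namespace ULogAux

open Topology Filter

abbrev E2 := EuclideanSpace ℝ (Fin 2)

noncomputable def c0 : E2 →L[ℝ] ℝ := EuclideanSpace.proj 0
noncomputable def c1 : E2 →L[ℝ] ℝ := EuclideanSpace.proj 1

def Q (x : E2) : ℝ := x 0 * x 0 + x 1 * x 1
def P (x : E2) : ℝ := x 0 * x 0 - x 1 * x 1

lemma Q_eq (x : E2) : Q x = ‖x‖ ^ 2 := by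
  have h := EuclideanSpace.norm_eq x
  rw [h, Real.sq_sqrt (by positivity)]
  simp [Q, Fin.sum_univ_two]
  ring

lemma Q_pos {x : E2} (hx : x ≠ 0) : 0 < Q x := by
  have h : ‖x‖ ≠ 0 := norm_ne_zero_iff.mpr hx
  rw [Q_eq]; positivity

lemma P_le (x : E2) : |P x| ≤ Q x := by
  simp only [P, Q, abs_le]
  constructor <;> nlinarith [mul_self_nonneg (x 0), mul_self_nonneg (x 1)]

lemma logQ (x : E2) : Real.log (Q x) = 2 * Real.log ‖x‖ := by
  rw [Q_eq, Real.log_pow]; norm_num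

lemma abs_coord_le (x : E2) (i : Fin 2) : |x i| ≤ ‖x‖ := by
  have h1 : (x i) ^ 2 ≤ ‖x‖ ^ 2 := by
    rw [← Q_eq]; fin_cases i <;> simp [Q] <;> nlinarith [mul_self_nonneg (x 0), mul_self_nonneg (x 1)]
  calc |x i| = Real.sqrt ((x i)^2) := (Real.sqrt_sq_eq_abs _).symm
    _ ≤ Real.sqrt (‖x‖^2) := Real.sqrt_le_sqrt h1
    _ = ‖x‖ := Real.sqrt_sq (norm_nonneg x)

lemma norm_c0_le : ‖c0‖ ≤ 1 :=
  c0.opNorm_le_bound zero_le_one (fun y => by simpa [c0] using (abs_coord_le y 0).trans (by linarith [norm_nonneg y]))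

lemma norm_c1_le : ‖c1‖ ≤ 1 :=
  c1.opNorm_le_bound zero_le_one (fun y => by simpa [c1] using (abs_coord_le y 1).trans (by linarith [norm_nonneg y]))

lemma uLog_eq (x : E2) : uLog x = P x * Real.log (Q x) / 2 := by
  rw [uLog, logQ, P]; ring


noncomputable def DQ (x : E2) : E2 →L[ℝ] ℝ := (2*x 0) • c0 + (2*x 1) • c1
noncomputable def DP (x : E2) : E2 →L[ℝ] ℝ := (2*x 0) • c0 - (2*x 1) • c1
noncomputable def f0 (x : E2) : ℝ := x 0 * Real.log (Q x) + P x * x 0 * (Q x)⁻¹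
noncomputable def f1 (x : E2) : ℝ := -(x 1 * Real.log (Q x)) + P x * x 1 * (Q x)⁻¹
noncomputable def g (x : E2) : E2 →L[ℝ] ℝ := f0 x • c0 + f1 x • c1
noncomputable def A (x : E2) : ℝ :=
  Real.log (Q x) + (4*(x 0*x 0) + P x) * (Q x)⁻¹ - 2*(x 0*x 0)*P x * ((Q x)^2)⁻¹
noncomputable def Bc (x : E2) : ℝ := -2*(x 0)*(x 1)*P x * ((Q x)^2)⁻¹
noncomputable def Cc (x : E2) : ℝ :=
  -Real.log (Q x) + (-4*(x 1*x 1) + P x) * (Q x)⁻¹ - 2*(x 1*x 1)*P x * ((Q x)^2)⁻¹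
noncomputable def H (x : E2) : E2 →L[ℝ] E2 →L[ℝ] ℝ :=
  (A x • c0 + Bc x • c1).smulRight c0 + (Bc x • c0 + Cc x • c1).smulRight c1

lemma h0 (x : E2) : HasFDerivAt (fun y : E2 => y 0) c0 x := c0.hasFDerivAt
lemma h1 (x : E2) : HasFDerivAt (fun y : E2 => y 1) c1 x := c1.hasFDerivAt

lemma hQ' (x : E2) : HasFDerivAt Q (DQ x) x := by
  have h := ((h0 x).mul (h0 x)).add ((h1 x).mul (h1 x))
  refine h.congr_fderiv ?_
  ext y
  simp [DQ, c0, c1]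
  ring

lemma hP' (x : E2) : HasFDerivAt P (DP x) x := by
  have h := ((h0 x).mul (h0 x)).sub ((h1 x).mul (h1 x))
  refine h.congr_fderiv ?_
  ext y
  simp [DP, c0, c1]
  ring

lemma hlog {x : E2} (hx : x ≠ 0) :
    HasFDerivAt (fun y => Real.log (Q y)) ((Q x)⁻¹ • DQ x) x :=
  (Real.hasDerivAt_log (Q_pos hx).ne').comp_hasFDerivAt x (hQ' x)

lemma hinvQ {x : E2} (hx : x ≠ 0) :
    HasFDerivAt (fun y => (Q y)⁻¹) ((-((Q x)^2)⁻¹) • DQ x) x :=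
  (hasDerivAt_inv (Q_pos hx).ne').comp_hasFDerivAt x (hQ' x)

lemma huLog {x : E2} (hx : x ≠ 0) : HasFDerivAt uLog (g x) x := by
  have hfun : uLog = fun y => P y * Real.log (Q y) / 2 := funext uLog_eq
  rw [hfun]
  simp only [div_eq_mul_inv]
  have h := ((hP' x).mul (hlog hx)).mul_const (2:ℝ)⁻¹
  refine h.congr_fderiv ?_
  have hq := (Q_pos hx).ne'
  ext y
  simp [g, f0, f1, DP, DQ, c0, c1]
  field_simp
  ring

lemma hf0 {x : E2} (hx : x ≠ 0) : HasFDerivAt f0 (A x • c0 + Bc x • c1) x := by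
  have h := ((h0 x).mul (hlog hx)).add (((hP' x).mul (h0 x)).mul (hinvQ hx))
  refine h.congr_fderiv ?_
  have hq := (Q_pos hx).ne'
  ext y
  simp [A, Bc, DP, DQ, c0, c1, f0]
  field_simp
  ring

lemma hf1 {x : E2} (hx : x ≠ 0) : HasFDerivAt f1 (Bc x • c0 + Cc x • c1) x := by
  have h := (((h1 x).mul (hlog hx)).neg).add (((hP' x).mul (h1 x)).mul (hinvQ hx))
  refine h.congr_fderiv ?_
  have hq := (Q_pos hx).ne'
  ext y
  simp [Cc, Bc, DP, DQ, c0, c1, f1]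
  field_simp
  ring

lemma hg {x : E2} (hx : x ≠ 0) : HasFDerivAt g (H x) x :=
  ((hf0 hx).smul_const c0).add ((hf1 hx).smul_const c1)


lemma g_zero : g 0 = 0 := by
  ext y
  simp [g, f0, f1, c0, c1]

lemma tendsto_tlogt : Filter.Tendsto (fun x : E2 => ‖x‖ * |Real.log ‖x‖|) (𝓝 0) (𝓝 0) := by
  have k1 : Filter.Tendsto (fun t : ℝ => t * |Real.log t|) (𝓝[>] (0:ℝ)) (𝓝 0) := by
    have h := (tendsto_log_mul_rpow_nhdsGT_zero one_pos).abs
    rw [abs_zero] at h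
    refine h.congr' ?_
    filter_upwards [self_mem_nhdsWithin] with t ht
    rw [Real.rpow_one, abs_mul, abs_of_pos (show (0:ℝ) < t from ht)]
    ring
  have k2 : Filter.Tendsto (fun t : ℝ => t * |Real.log t|) (𝓝[≥] (0:ℝ)) (𝓝 0) := by
    have hs : Set.Ici (0:ℝ) = {0} ∪ Set.Ioi 0 := by
      ext t
      simp only [Set.mem_Ici, Set.mem_union, Set.mem_singleton_iff, Set.mem_Ioi]
      rw [le_iff_eq_or_lt, eq_comm]
    rw [show (𝓝[≥] (0:ℝ)) = 𝓝[{0}] 0 ⊔ 𝓝[>] (0:ℝ) by rw [← nhdsWithin_union, ← hs]]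
    refine Filter.Tendsto.sup ?_ k1
    rw [nhdsWithin_singleton]
    have := tendsto_pure_nhds (fun t : ℝ => t * |Real.log t|) 0
    simpa using this
  have k3 : Filter.Tendsto (fun x : E2 => ‖x‖) (𝓝 0) (𝓝[≥] (0:ℝ)) := by
    refine tendsto_nhdsWithin_iff.mpr ⟨?_, Filter.Eventually.of_forall fun x => norm_nonneg x⟩
    simpa using continuous_norm.tendsto (0 : E2)
  exact k2.comp k3

lemma uLog_zero : uLog 0 = 0 := by simp [uLog]

lemma abs_uLog_le (x : E2) : |uLog x| ≤ ‖x‖ * (‖x‖ * |Real.log ‖x‖|) := by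
  have h1 : |(x 0) ^ 2 - (x 1) ^ 2| ≤ ‖x‖ ^ 2 := by
    have := P_le x
    rw [← Q_eq]
    simp only [P, Q] at this ⊢
    calc |x 0 ^ 2 - x 1 ^ 2| = |x 0 * x 0 - x 1 * x 1| := by ring_nf
      _ ≤ x 0 * x 0 + x 1 * x 1 := this
  calc |uLog x| = |(x 0) ^ 2 - (x 1) ^ 2| * |Real.log ‖x‖| := abs_mul _ _
    _ ≤ ‖x‖ ^ 2 * |Real.log ‖x‖| := by
        exact mul_le_mul_of_nonneg_right h1 (abs_nonneg _)
    _ = ‖x‖ * (‖x‖ * |Real.log ‖x‖|) := by ring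

lemma huLog0 : HasFDerivAt uLog (g 0) 0 := by
  rw [g_zero, hasFDerivAt_iff_isLittleO_nhds_zero]
  rw [Asymptotics.isLittleO_iff]
  intro c hc
  filter_upwards [tendsto_tlogt.eventually (gt_mem_nhds hc)] with x hx
  simp only [zero_add, uLog_zero, ContinuousLinearMap.zero_apply, sub_zero]
  calc ‖uLog x‖ ≤ ‖x‖ * (‖x‖ * |Real.log ‖x‖|) := by
        rw [Real.norm_eq_abs]; exact abs_uLog_le x
    _ ≤ ‖x‖ * c := mul_le_mul_of_nonneg_left hx.le (norm_nonneg x)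
    _ = c * ‖x‖ := mul_comm _ _

lemma diff_uLog : Differentiable ℝ uLog := by
  intro x
  by_cases hx : x = 0
  · subst hx; exact huLog0.differentiableAt
  · exact (huLog hx).differentiableAt

lemma fderiv_uLog : fderiv ℝ uLog = g := by
  funext x
  by_cases hx : x = 0
  · subst hx; exact huLog0.fderiv
  · exact (huLog hx).fderiv

lemma g_bound (x : E2) : ‖g x‖ ≤ 2 * ‖x‖ + 4 * (‖x‖ * |Real.log ‖x‖|) := by
  by_cases hx : x = 0
  · simp [hx, g_zero]
  · have hq := Q_pos hx
    have hx0 := abs_coord_le x 0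
    have hx1 := abs_coord_le x 1
    have hPle := P_le x
    have hlogabs : |Real.log (Q x)| = 2 * |Real.log ‖x‖| := by
      rw [logQ, abs_mul]; norm_num
    have key : ∀ i : Fin 2, |x i| ≤ ‖x‖ → ∀ s : ℝ, |s| ≤ 1 →
        |s * (x i * Real.log (Q x)) + P x * x i * (Q x)⁻¹| ≤
          ‖x‖ + 2 * (‖x‖ * |Real.log ‖x‖|) := by
      intro i hi s hs
      calc |s * (x i * Real.log (Q x)) + P x * x i * (Q x)⁻¹|
          ≤ |s * (x i * Real.log (Q x))| + |P x * x i * (Q x)⁻¹| := abs_add_le _ _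
        _ ≤ |x i| * |Real.log (Q x)| + |P x| * |x i| * (Q x)⁻¹ := by
            simp only [abs_mul, abs_inv, abs_of_pos hq]
            have h2 : |s| * (|x i| * |Real.log (Q x)|) ≤ 1 * (|x i| * |Real.log (Q x)|) :=
              mul_le_mul_of_nonneg_right hs (by positivity)
            nlinarith [abs_nonneg (x i), abs_nonneg (Real.log (Q x))]
        _ ≤ ‖x‖ * (2 * |Real.log ‖x‖|) + Q x * ‖x‖ * (Q x)⁻¹ := by
            rw [hlogabs]
            have t1 : |x i| * (2 * |Real.log ‖x‖|) ≤ ‖x‖ * (2 * |Real.log ‖x‖|) :=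
              mul_le_mul_of_nonneg_right hi (by positivity)
            have t2 : |P x| * |x i| ≤ Q x * ‖x‖ :=
              mul_le_mul hPle hi (abs_nonneg _) hq.le
            have t3 : |P x| * |x i| * (Q x)⁻¹ ≤ Q x * ‖x‖ * (Q x)⁻¹ :=
              mul_le_mul_of_nonneg_right t2 (by positivity)
            nlinarith [t1, t3]
        _ = ‖x‖ + 2 * (‖x‖ * |Real.log ‖x‖|) := by
            rw [mul_comm (Q x) ‖x‖, mul_assoc, mul_inv_cancel₀ hq.ne', mul_one]
            ring
    have kf0 : |f0 x| ≤ ‖x‖ + 2 * (‖x‖ * |Real.log ‖x‖|) := by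
      have := key 0 hx0 1 (by norm_num)
      simpa [f0] using this
    have kf1 : |f1 x| ≤ ‖x‖ + 2 * (‖x‖ * |Real.log ‖x‖|) := by
      have := key 1 hx1 (-1) (by norm_num)
      have e : f1 x = (-1) * (x 1 * Real.log (Q x)) + P x * x 1 * (Q x)⁻¹ := by
        simp only [f1]; ring
      rw [e]
      exact this
    calc ‖g x‖ ≤ ‖f0 x • c0‖ + ‖f1 x • c1‖ := norm_add_le _ _
      _ ≤ |f0 x| * 1 + |f1 x| * 1 := by
          have n0 := norm_smul_le (f0 x) c0
          have n1 := norm_smul_le (f1 x) c1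
          rw [Real.norm_eq_abs] at n0 n1
          exact add_le_add (n0.trans (mul_le_mul_of_nonneg_left norm_c0_le (abs_nonneg _)))
            (n1.trans (mul_le_mul_of_nonneg_left norm_c1_le (abs_nonneg _)))
      _ ≤ 2 * ‖x‖ + 4 * (‖x‖ * |Real.log ‖x‖|) := by
          simp only [mul_one]
          linarith [kf0, kf1]

lemma cont_g : Continuous g := by
  rw [continuous_iff_continuousAt]
  intro x
  by_cases hx : x = 0
  · subst hx
    rw [ContinuousAt, g_zero]
    apply squeeze_zero_norm g_bound
    have t1 : Filter.Tendsto (fun x : E2 => ‖x‖) (𝓝 0) (𝓝 0) := by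
      simpa using continuous_norm.tendsto (0 : E2)
    have := (t1.const_mul 2).add (tendsto_tlogt.const_mul 4)
    simpa using this
  · exact (hg hx).continuousAt

lemma contDiff_one_uLog : ContDiff ℝ 1 uLog :=
  contDiff_one_iff_fderiv.mpr ⟨diff_uLog, by rw [fderiv_uLog]; exact cont_g⟩

lemma contDiffOn_top_uLog : ContDiffOn ℝ (⊤ : ℕ∞) uLog {(0 : E2)}ᶜ := by
  have hfun : uLog = fun y => P y * Real.log (Q y) / 2 := funext uLog_eq
  rw [hfun]
  intro x hx
  have hx' : x ≠ 0 := hx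
  apply ContDiffAt.contDiffWithinAt
  have hc0 : ContDiff ℝ (⊤ : ℕ∞) (fun y : E2 => y 0) := c0.contDiff
  have hc1 : ContDiff ℝ (⊤ : ℕ∞) (fun y : E2 => y 1) := c1.contDiff
  have hQc : ContDiff ℝ (⊤ : ℕ∞) Q := (hc0.mul hc0).add (hc1.mul hc1)
  have hPc : ContDiff ℝ (⊤ : ℕ∞) P := (hc0.mul hc0).sub (hc1.mul hc1)
  have hlogc : ContDiffAt ℝ (⊤ : ℕ∞) (fun y => Real.log (Q y)) x :=
    (Real.contDiffAt_log.mpr (Q_pos hx').ne').comp x hQc.contDiffAt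
  exact (hPc.contDiffAt.mul hlogc).div_const 2


lemma fderiv2 {x : E2} (hx : x ≠ 0) : fderiv ℝ (fderiv ℝ uLog) x = H x := by
  rw [fderiv_uLog]; exact (hg hx).fderiv

lemma laplacian {x : E2} (hx : x ≠ 0) :
    H x (EuclideanSpace.single 0 (1:ℝ)) (EuclideanSpace.single 0 (1:ℝ)) +
      H x (EuclideanSpace.single 1 (1:ℝ)) (EuclideanSpace.single 1 (1:ℝ)) =
      4 * P x / Q x := by
  have hq := (Q_pos hx).ne'
  simp [H, A, Bc, Cc, c0, c1, EuclideanSpace.single_apply]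
  field_simp
  simp only [P, Q]
  ring

lemma laplacian_abs_le {x : E2} (hx : x ≠ 0) : |4 * P x / Q x| ≤ 4 := by
  have hq := Q_pos hx
  rw [abs_div, abs_of_pos hq, div_le_iff₀ hq, abs_mul]
  have := P_le x
  have : |(4:ℝ)| = 4 := by norm_num
  nlinarith [P_le x, abs_nonneg (P x)]

lemma frac_le {N D C : ℝ} (hD : 0 < D) (h : |N| ≤ C * D) : |N * D⁻¹| ≤ C := by
  rw [abs_mul, abs_inv, abs_of_pos hD]
  calc |N| * D⁻¹ ≤ C * D * D⁻¹ := mul_le_mul_of_nonneg_right h (by positivity)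
    _ = C := by field_simp

lemma hA_le {x : E2} (hx : x ≠ 0) : |A x| ≤ |Real.log (Q x)| + 7 := by
  have hq := Q_pos hx
  have hq2 : (0:ℝ) < (Q x)^2 := by positivity
  have ha2 : x 0 * x 0 ≤ Q x := by simp only [Q]; nlinarith [mul_self_nonneg (x 1)]
  have t1 : |(4*(x 0*x 0) + P x) * (Q x)⁻¹| ≤ 5 := by
    apply frac_le hq
    have := P_le x
    rw [abs_le] at this ⊢
    constructor <;> nlinarith [mul_self_nonneg (x 0)]
  have t2 : |2*(x 0*x 0)*P x * ((Q x)^2)⁻¹| ≤ 2 := by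
    apply frac_le hq2
    rw [abs_mul, abs_of_nonneg (by nlinarith [mul_self_nonneg (x 0)] : (0:ℝ) ≤ 2*(x 0*x 0))]
    nlinarith [P_le x, abs_nonneg (P x), mul_self_nonneg (x 0)]
  calc |A x| ≤ |Real.log (Q x) + (4*(x 0*x 0) + P x) * (Q x)⁻¹| + |2*(x 0*x 0)*P x * ((Q x)^2)⁻¹| := by
        rw [A]; exact abs_sub _ _
    _ ≤ |Real.log (Q x)| + |(4*(x 0*x 0) + P x) * (Q x)⁻¹| + |2*(x 0*x 0)*P x * ((Q x)^2)⁻¹| := by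
        have := abs_add_le (Real.log (Q x)) ((4*(x 0*x 0) + P x) * (Q x)⁻¹)
        linarith
    _ ≤ |Real.log (Q x)| + 7 := by linarith

lemma hC_le {x : E2} (hx : x ≠ 0) : |Cc x| ≤ |Real.log (Q x)| + 7 := by
  have hq := Q_pos hx
  have hq2 : (0:ℝ) < (Q x)^2 := by positivity
  have hb2 : x 1 * x 1 ≤ Q x := by simp only [Q]; nlinarith [mul_self_nonneg (x 0)]
  have t1 : |(-4*(x 1*x 1) + P x) * (Q x)⁻¹| ≤ 5 := by
    apply frac_le hq
    have := P_le x
    rw [abs_le] at this ⊢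
    constructor <;> nlinarith [mul_self_nonneg (x 0), mul_self_nonneg (x 1)]
  have t2 : |2*(x 1*x 1)*P x * ((Q x)^2)⁻¹| ≤ 2 := by
    apply frac_le hq2
    rw [abs_mul, abs_of_nonneg (by nlinarith [mul_self_nonneg (x 1)] : (0:ℝ) ≤ 2*(x 1*x 1))]
    have hb2 : x 1 * x 1 ≤ Q x := by simp only [Q]; nlinarith [mul_self_nonneg (x 0)]
    nlinarith [P_le x, abs_nonneg (P x), mul_self_nonneg (x 1)]
  calc |Cc x| ≤ |-Real.log (Q x) + (-4*(x 1*x 1) + P x) * (Q x)⁻¹| + |2*(x 1*x 1)*P x * ((Q x)^2)⁻¹| := by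
        rw [Cc]; exact abs_sub _ _
    _ ≤ |Real.log (Q x)| + |(-4*(x 1*x 1) + P x) * (Q x)⁻¹| + |2*(x 1*x 1)*P x * ((Q x)^2)⁻¹| := by
        have := abs_add_le (-Real.log (Q x)) ((-4*(x 1*x 1) + P x) * (Q x)⁻¹)
        rw [abs_neg] at this
        linarith
    _ ≤ |Real.log (Q x)| + 7 := by linarith

lemma hB_le {x : E2} (hx : x ≠ 0) : |Bc x| ≤ 2 := by
  have hq := Q_pos hx
  have hq2 : (0:ℝ) < (Q x)^2 := by positivity
  rw [Bc]
  have e : -2*(x 0)*(x 1)*P x * ((Q x)^2)⁻¹ = (-2*(x 0)*(x 1)*P x) * ((Q x)^2)⁻¹ := by ring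
  rw [e]
  apply frac_le hq2
  have e2 : |-2*(x 0)*(x 1)*P x| = 2 * |x 0| * |x 1| * |P x| := by
    rw [abs_mul, abs_mul, abs_mul]
    norm_num
  rw [e2]
  have hab : |x 0| * |x 1| ≤ Q x := by
    simp only [Q]
    nlinarith [sq_nonneg (|x 0| - |x 1|), abs_mul_abs_self (x 0), abs_mul_abs_self (x 1),
      abs_nonneg (x 0), abs_nonneg (x 1)]
  nlinarith [P_le x, abs_nonneg (P x), abs_nonneg (x 0), abs_nonneg (x 1),
    mul_nonneg (abs_nonneg (x 0)) (abs_nonneg (x 1))]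

lemma H_apply (x y : E2) : H x y =
    (A x * y 0 + Bc x * y 1) • c0 + (Bc x * y 0 + Cc x * y 1) • c1 := by
  ext z
  simp [H, c0, c1]

lemma H_norm_le {x : E2} (hx : x ≠ 0) : ‖H x‖ ≤ 2 * |Real.log (Q x)| + 18 := by
  have hA := hA_le hx
  have hB := hB_le hx
  have hC := hC_le hx
  have hlognn : (0:ℝ) ≤ |Real.log (Q x)| := abs_nonneg _
  apply ContinuousLinearMap.opNorm_le_bound _ (by linarith)
  intro y
  rw [H_apply]
  have hy0 := abs_coord_le y 0
  have hy1 := abs_coord_le y 1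
  have hynn := norm_nonneg y
  have k : ∀ a b : ℝ, |a| ≤ |Real.log (Q x)| + 7 → |b| ≤ 2 →
      |a * y 0 + b * y 1| ≤ (|Real.log (Q x)| + 9) * ‖y‖ := by
    intro a b ha hb
    calc |a * y 0 + b * y 1| ≤ |a| * |y 0| + |b| * |y 1| := by
          refine (abs_add_le _ _).trans ?_
          rw [abs_mul, abs_mul]
      _ ≤ (|Real.log (Q x)| + 7) * ‖y‖ + 2 * ‖y‖ := by
          refine add_le_add ?_ ?_
          · exact mul_le_mul ha hy0 (abs_nonneg _) (by linarith)
          · exact mul_le_mul hb hy1 (abs_nonneg _) (by norm_num)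
      _ = (|Real.log (Q x)| + 9) * ‖y‖ := by ring
  have k1 := k (A x) (Bc x) hA hB
  have k2' : |Bc x * y 0 + Cc x * y 1| ≤ (|Real.log (Q x)| + 9) * ‖y‖ := by
    calc |Bc x * y 0 + Cc x * y 1| ≤ |Bc x| * |y 0| + |Cc x| * |y 1| := by
          refine (abs_add_le _ _).trans ?_
          rw [abs_mul, abs_mul]
      _ ≤ 2 * ‖y‖ + (|Real.log (Q x)| + 7) * ‖y‖ := by
          refine add_le_add ?_ ?_
          · exact mul_le_mul hB hy0 (abs_nonneg _) (by norm_num)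
          · exact mul_le_mul hC hy1 (abs_nonneg _) (by linarith)
      _ = (|Real.log (Q x)| + 9) * ‖y‖ := by ring
  have n0 := norm_smul_le (A x * y 0 + Bc x * y 1) c0
  have n1 := norm_smul_le (Bc x * y 0 + Cc x * y 1) c1
  rw [Real.norm_eq_abs] at n0 n1
  have hc0n := norm_c0_le
  have hc1n := norm_c1_le
  calc ‖(A x * y 0 + Bc x * y 1) • c0 + (Bc x * y 0 + Cc x * y 1) • c1‖
      ≤ ‖(A x * y 0 + Bc x * y 1) • c0‖ + ‖(Bc x * y 0 + Cc x * y 1) • c1‖ := norm_add_le _ _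
    _ ≤ |A x * y 0 + Bc x * y 1| * 1 + |Bc x * y 0 + Cc x * y 1| * 1 := by
        exact add_le_add (n0.trans (mul_le_mul_of_nonneg_left hc0n (abs_nonneg _)))
          (n1.trans (mul_le_mul_of_nonneg_left hc1n (abs_nonneg _)))
    _ ≤ (2 * |Real.log (Q x)| + 18) * ‖y‖ := by
        simp only [mul_one]
        nlinarith [k1, k2']

lemma abs_log_norm {x : E2} (h0 : 0 < ‖x‖) (h1 : ‖x‖ < 1) :
    |Real.log ‖x‖| = Real.log (1/‖x‖) := by
  rw [one_div, Real.log_inv, abs_of_nonpos (Real.log_nonpos h0.le h1.le)]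

lemma log_inv_nonneg {x : E2} (h0 : 0 < ‖x‖) (h1 : ‖x‖ < 1) :
    0 ≤ Real.log (1/‖x‖) := by
  rw [← abs_log_norm h0 h1]; exact abs_nonneg _


lemma norm_fderiv_le {x : E2} (h0 : 0 < ‖x‖) (h1 : ‖x‖ < 1) :
    ‖fderiv ℝ uLog x‖ ≤ 100 * ‖x‖ * (1 + Real.log (1/‖x‖)) := by
  rw [fderiv_uLog]
  have hb := g_bound x
  have hl := abs_log_norm h0 h1
  have hln := log_inv_nonneg h0 h1
  rw [hl] at hb
  have := mul_nonneg h0.le hln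
  nlinarith [hb, h0, hln]

lemma norm_H_le' {x : E2} (h0 : 0 < ‖x‖) (h1 : ‖x‖ < 1) :
    ‖H x‖ ≤ 100 * (1 + Real.log (1/‖x‖)) := by
  have hx : x ≠ 0 := fun h => by simp [h] at h0
  have hb := H_norm_le hx
  have e : |Real.log (Q x)| = 2 * Real.log (1/‖x‖) := by
    rw [logQ, abs_mul, abs_log_norm h0 h1]
    norm_num
  rw [e] at hb
  have hln := log_inv_nonneg h0 h1
  linarith

end ULogAux


/-- The function `u(x) = (x₁² - x₂²) log ‖x‖` is `C¹` on `ℝ²` and smooth away from the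
origin; its Laplacian at `x ≠ 0` equals `4 (x₁² - x₂²)/‖x‖²` (so it is bounded by `4`);
and for `i ∈ {1,2}` and `0 < ‖x‖ < 1` one has
`‖Dⁱu(x)‖ ≤ Γ ‖x‖^{2-i} (1 + log (1/‖x‖))` for some constant `Γ`. -/
theorem uLog_properties :
    ContDiff ℝ 1 uLog ∧
    ContDiffOn ℝ (⊤ : ℕ∞) uLog {(0 : EuclideanSpace ℝ (Fin 2))}ᶜ ∧
    (∀ x : EuclideanSpace ℝ (Fin 2), x ≠ 0 →
      fderiv ℝ (fderiv ℝ uLog) x (EuclideanSpace.single 0 (1 : ℝ))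
          (EuclideanSpace.single 0 (1 : ℝ)) +
        fderiv ℝ (fderiv ℝ uLog) x (EuclideanSpace.single 1 (1 : ℝ))
          (EuclideanSpace.single 1 (1 : ℝ)) =
          4 * ((x 0) ^ 2 - (x 1) ^ 2) / ‖x‖ ^ 2 ∧
      |fderiv ℝ (fderiv ℝ uLog) x (EuclideanSpace.single 0 (1 : ℝ))
          (EuclideanSpace.single 0 (1 : ℝ)) +
        fderiv ℝ (fderiv ℝ uLog) x (EuclideanSpace.single 1 (1 : ℝ))
          (EuclideanSpace.single 1 (1 : ℝ))| ≤ 4) ∧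
    (∃ Γ : ℝ, 0 < Γ ∧ ∀ i ∈ ({1, 2} : Set ℕ), ∀ x : EuclideanSpace ℝ (Fin 2),
      0 < ‖x‖ → ‖x‖ < 1 →
      ‖iteratedFDeriv ℝ i uLog x‖ ≤
        Γ * ‖x‖ ^ ((2 : ℝ) - i) * (1 + Real.log (1 / ‖x‖))) := by
  refine ⟨ULogAux.contDiff_one_uLog, ULogAux.contDiffOn_top_uLog, ?_, ⟨100, by norm_num, ?_⟩⟩
  · intro x hx
    rw [ULogAux.fderiv2 hx, ULogAux.laplacian hx]
    have hPval : ULogAux.P x = (x 0)^2 - (x 1)^2 := by simp only [ULogAux.P]; ring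
    have hQval : ULogAux.Q x = ‖x‖^2 := ULogAux.Q_eq x
    refine ⟨by rw [hPval, hQval], ULogAux.laplacian_abs_le hx⟩
  · intro i hi x h0 h1
    have hx : x ≠ 0 := fun h => by simp [h] at h0
    have hlnn := ULogAux.log_inv_nonneg h0 h1
    simp only [Set.mem_insert_iff, Set.mem_singleton_iff] at hi
    rcases hi with rfl | rfl
    · have e1 : ‖iteratedFDeriv ℝ 1 uLog x‖ = ‖fderiv ℝ uLog x‖ := by
        rw [← norm_iteratedFDeriv_fderiv, norm_iteratedFDeriv_zero]
      have e2 : ‖x‖ ^ ((2:ℝ) - (1:ℕ)) = ‖x‖ := by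
        norm_num
      rw [e1, e2]
      exact ULogAux.norm_fderiv_le h0 h1
    · have e1 : ‖iteratedFDeriv ℝ 2 uLog x‖ = ‖fderiv ℝ (fderiv ℝ uLog) x‖ := by
        have h21 : ‖iteratedFDeriv ℝ 2 uLog x‖ = ‖iteratedFDeriv ℝ 1 (fderiv ℝ uLog) x‖ :=
          (norm_iteratedFDeriv_fderiv (n := 1)).symm
        rw [h21, ← norm_iteratedFDeriv_fderiv, norm_iteratedFDeriv_zero]
      have e2 : ‖x‖ ^ ((2:ℝ) - (2:ℕ)) = 1 := by
        norm_num
      rw [e1, e2, ULogAux.fderiv2 hx]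
      have := ULogAux.norm_H_le' h0 h1
      linarith
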